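/- Let 0 < α < 1, assume the SICA parameters are positive, the incidence function f satisfies (H1)–(H3), and R₀ ≤ 1. Let (S,I,C,A) be a solution of the fractional SICA system on [0,T] with S, I, C, A positive on [0,T]. Define the Lyapunov functional V₁(t) = S(t) − S₀ − ∫_{S₀}^{S(t)} f(S₀,0)/f(X,0) dX + I(t) + (ω/ξ₂) C(t) + (σ/ξ₃) A(t). Then ᶜD^α V₁(t) ≤ 0 for all t ∈ (0,T]. -/

import Mathlib

/-- The Caputo fractional derivative of order `α` (0 < α < 1) based at `0`:
`ᶜD^α φ(t) = (1/Γ(1−α)) ∫₀ᵗ φ′(x)(t−x)^{−α} dx`. -/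
noncomputable def caputo (α : ℝ) (φ : ℝ → ℝ) (t : ℝ) : ℝ :=
  (1 / Real.Gamma (1 - α)) * ∫ x in (0:ℝ)..t, deriv φ x * (t - x) ^ (-α)

/-!
Write `V₁ = g ∘ S + I + (ω/ξ₂) C + (σ/ξ₃) A` with `g(x) = x - S₀ - ∫_{S₀}^x f(S₀,0)/f(X,0) dX`.
By (H1)–(H2), `f(·,0)` is positive and increasing, so `g' = 1 - f(S₀,0)/f(·,0)` is increasing
and `g` is convex. For convex `g` one has `ᶜD^α (g ∘ S)(t) ≤ g'(S t) · ᶜD^α S(t)`: the function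
`g ∘ S - g'(S t) S` attains its minimum over `[0, t]` at `t`, and the Caputo derivative of a
`C¹` function is nonpositive at such a point (integrate by parts against the shifted kernel
`(t - x + ε)^{-α}` and let `ε → 0`). By linearity, `ᶜD^α V₁(t)` is then bounded by the weighted
sum of the right-hand sides of the system, which is nonpositive since `f(S,I) ≤ f(S,0)` (H3),
`(1 - f(S₀,0)/f(S,0)) (S₀ - S) ≤ 0` and `R₀ ≤ 1`.
-/

open MeasureTheory Set Filter Topology

section Caputo

variable {α t : ℝ} {p q w : ℝ → ℝ}

lemma intervalIntegrable_sub_rpow_neg (hα : α < 1) (t : ℝ) :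
    IntervalIntegrable (fun x => (t - x) ^ (-α)) volume 0 t := by
  simpa using (intervalIntegral.intervalIntegrable_rpow' (r := -α) (a := 0) (b := t)
    (by linarith)).comp_sub_left t |>.symm

lemma caputo_eq_integral_derivWithin (ht : 0 < t) (α : ℝ) (p : ℝ → ℝ) :
    caputo α p t =
      (1 / Real.Gamma (1 - α)) * ∫ x in 0..t, derivWithin p (Icc 0 t) x * (t - x) ^ (-α) := by
  rw [caputo, intervalIntegral.integral_congr_ae]
  filter_upwards [Measure.ae_ne volume t] with x hxt hx
  rw [uIoc_of_le ht.le] at hx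
  rw [derivWithin_of_mem_nhds (Icc_mem_nhds hx.1 (lt_of_le_of_ne hx.2 hxt))]

lemma ContDiffOn.intervalIntegrable_derivWithin_mul_sub_rpow_neg (hα : α < 1) (ht : 0 < t)
    (hp : ContDiffOn ℝ 1 p (Icc 0 t)) :
    IntervalIntegrable (fun x => derivWithin p (Icc 0 t) x * (t - x) ^ (-α)) volume 0 t :=
  (intervalIntegrable_sub_rpow_neg hα t).continuousOn_mul <| by
    rw [uIcc_of_le ht.le]
    exact hp.continuousOn_derivWithin (uniqueDiffOn_Icc ht) le_rfl

lemma caputo_add (hα : α < 1) (ht : 0 < t) (hp : ContDiffOn ℝ 1 p (Icc 0 t))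
    (hq : ContDiffOn ℝ 1 q (Icc 0 t)) :
    caputo α (fun τ => p τ + q τ) t = caputo α p t + caputo α q t := by
  simp only [caputo_eq_integral_derivWithin ht, ← mul_add]
  rw [← intervalIntegral.integral_add
    (hp.intervalIntegrable_derivWithin_mul_sub_rpow_neg hα ht)
    (hq.intervalIntegrable_derivWithin_mul_sub_rpow_neg hα ht)]
  congr 1
  refine intervalIntegral.integral_congr fun x hx => ?_
  rw [uIcc_of_le ht.le] at hx
  rw [derivWithin_fun_add (hp.differentiableOn one_ne_zero x hx)
    (hq.differentiableOn one_ne_zero x hx), add_mul]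

lemma caputo_sub (hα : α < 1) (ht : 0 < t) (hp : ContDiffOn ℝ 1 p (Icc 0 t))
    (hq : ContDiffOn ℝ 1 q (Icc 0 t)) :
    caputo α (fun τ => p τ - q τ) t = caputo α p t - caputo α q t := by
  simp only [caputo_eq_integral_derivWithin ht, ← mul_sub]
  rw [← intervalIntegral.integral_sub
    (hp.intervalIntegrable_derivWithin_mul_sub_rpow_neg hα ht)
    (hq.intervalIntegrable_derivWithin_mul_sub_rpow_neg hα ht)]
  congr 1
  refine intervalIntegral.integral_congr fun x hx => ?_
  rw [uIcc_of_le ht.le] at hx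
  rw [derivWithin_fun_sub (hp.differentiableOn one_ne_zero x hx)
    (hq.differentiableOn one_ne_zero x hx), sub_mul]

lemma caputo_const_mul (c : ℝ) (α : ℝ) (p : ℝ → ℝ) (t : ℝ) :
    caputo α (fun τ => c * p τ) t = c * caputo α p t := by
  simp only [caputo, deriv_const_mul_field', mul_assoc, intervalIntegral.integral_const_mul]
  ring

lemma ContDiffOn.hasDerivAt_derivWithin_Icc {a b x : ℝ} {w : ℝ → ℝ}
    (hw : ContDiffOn ℝ 1 w (Icc a b)) (hx : x ∈ Ioo a b) :
    HasDerivAt w (derivWithin w (Icc a b) x) x := by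
  have hn : Icc a b ∈ 𝓝 x := Icc_mem_nhds hx.1 hx.2
  rw [derivWithin_of_mem_nhds hn]
  exact ((hw.differentiableOn one_ne_zero x (Ioo_subset_Icc_self hx)).differentiableAt
    hn).hasDerivAt

/-- Against the shifted kernel `(t - x + ε)^(-α)` the integration by parts has no singular
endpoint, and since `w ≥ w t` both the boundary term and the remainder have a sign. -/
lemma integral_derivWithin_mul_add_rpow_neg_nonpos (hα : 0 ≤ α) (ht : 0 < t)
    (hw : ContDiffOn ℝ 1 w (Icc 0 t)) (hmin : IsMinOn w (Icc 0 t) t) {ε : ℝ} (hε : 0 < ε) :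
    ∫ x in 0..t, derivWithin w (Icc 0 t) x * (t - x + ε) ^ (-α) ≤ 0 := by
  set w' := derivWithin w (Icc 0 t)
  have hbase : ∀ x ∈ Icc 0 t, 0 < t - x + ε := fun x hx => by linarith [hx.2]
  have hrpow : ∀ r : ℝ, ContinuousOn (fun x => (t - x + ε) ^ r) (Icc 0 t) := fun r =>
    (continuousOn_const.sub continuousOn_id).add continuousOn_const |>.rpow_const
      fun x hx => Or.inl (hbase x hx).ne'
  have hw'c : ContinuousOn w' (Icc 0 t) := hw.continuousOn_derivWithin (uniqueDiffOn_Icc ht) le_rfl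
  have hderiv : ∀ x ∈ Ioo 0 t, HasDerivAt (fun y => (w y - w t) * (t - y + ε) ^ (-α))
      (w' x * (t - x + ε) ^ (-α) + (w x - w t) * (α * (t - x + ε) ^ (-α - 1))) x := by
    intro x hx
    have hinner : HasDerivAt (fun y => t - y + ε) (-1) x := by
      simpa using ((hasDerivAt_id x).const_sub t).add_const ε
    have hk : HasDerivAt (fun y => (t - y + ε) ^ (-α)) (α * (t - x + ε) ^ (-α - 1)) x :=
      (hinner.rpow_const (Or.inl (hbase x (Ioo_subset_Icc_self hx)).ne')).congr_deriv (by ring)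
    exact ((hw.hasDerivAt_derivWithin_Icc hx).sub_const (w t)).mul hk
  have hint : ∀ g : ℝ → ℝ, ContinuousOn g (Icc 0 t) → IntervalIntegrable g volume 0 t :=
    fun g hg => hg.intervalIntegrable_of_Icc ht.le
  have hI₁ : IntervalIntegrable (fun x => w' x * (t - x + ε) ^ (-α)) volume 0 t :=
    hint _ (hw'c.mul (hrpow (-α)))
  have hI₂ : IntervalIntegrable (fun x => (w x - w t) * (α * (t - x + ε) ^ (-α - 1)))
      volume 0 t :=
    hint _ ((hw.continuousOn.sub continuousOn_const).mul
      (continuousOn_const.mul (hrpow (-α - 1))))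
  have hF : ContinuousOn (fun y => (w y - w t) * (t - y + ε) ^ (-α)) (Icc 0 t) :=
    (hw.continuousOn.sub continuousOn_const).mul (hrpow (-α))
  have hFTC := intervalIntegral.integral_eq_sub_of_hasDerivAt_of_le ht.le hF hderiv (hI₁.add hI₂)
  rw [intervalIntegral.integral_add hI₁ hI₂] at hFTC
  have hremainder : 0 ≤ ∫ x in 0..t, (w x - w t) * (α * (t - x + ε) ^ (-α - 1)) :=
    intervalIntegral.integral_nonneg ht.le fun x hx =>
      mul_nonneg (sub_nonneg.2 (hmin hx)) (mul_nonneg hα (by have := hbase x hx; positivity))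
  have hboundary : 0 ≤ (w 0 - w t) * (t - 0 + ε) ^ (-α) :=
    mul_nonneg (sub_nonneg.2 (hmin (left_mem_Icc.2 ht.le)))
      (by have := hbase 0 (left_mem_Icc.2 ht.le); positivity)
  rw [sub_self, zero_mul] at hFTC
  linarith

lemma integral_derivWithin_mul_sub_rpow_neg_nonpos (hα0 : 0 ≤ α) (hα1 : α < 1) (ht : 0 < t)
    (hw : ContDiffOn ℝ 1 w (Icc 0 t)) (hmin : IsMinOn w (Icc 0 t) t) :
    ∫ x in 0..t, derivWithin w (Icc 0 t) x * (t - x) ^ (-α) ≤ 0 := by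
  set w' := derivWithin w (Icc 0 t)
  have hw'c : ContinuousOn w' (Icc 0 t) := hw.continuousOn_derivWithin (uniqueDiffOn_Icc ht) le_rfl
  obtain ⟨M, hM⟩ := isCompact_Icc.exists_bound_of_continuousOn hw'c
  have hlim : Tendsto (fun ε => ∫ x in 0..t, w' x * (t - x + ε) ^ (-α)) (𝓝[>] 0)
      (𝓝 (∫ x in 0..t, w' x * (t - x) ^ (-α))) := by
    refine intervalIntegral.tendsto_integral_filter_of_dominated_convergence
      (fun x => M * (t - x) ^ (-α)) ?_ ?_ ((intervalIntegrable_sub_rpow_neg hα1 t).const_mul M) ?_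
    · filter_upwards [self_mem_nhdsWithin] with ε (hε : 0 < ε)
      refine ContinuousOn.aestronglyMeasurable ?_ measurableSet_uIoc
      rw [uIoc_of_le ht.le]
      have hk : ContinuousOn (fun x => (t - x + ε) ^ (-α)) (Icc 0 t) :=
        ContinuousOn.rpow_const (by fun_prop) fun x hx => Or.inl (by linarith [hx.2])
      exact (hw'c.mul hk).mono Ioc_subset_Icc_self
    · filter_upwards [self_mem_nhdsWithin] with ε (hε : 0 < ε)
      filter_upwards [Measure.ae_ne volume t] with x hxt hx
      rw [uIoc_of_le ht.le] at hx
      have hx' : 0 < t - x := sub_pos.2 (lt_of_le_of_ne hx.2 hxt)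
      have hk := Real.rpow_nonneg (by linarith : 0 ≤ t - x + ε) (-α)
      rw [norm_mul, Real.norm_of_nonneg hk]
      exact mul_le_mul (hM x (Ioc_subset_Icc_self hx))
        (Real.rpow_le_rpow_of_nonpos hx' (by linarith) (by linarith)) hk
        ((norm_nonneg _).trans (hM x (Ioc_subset_Icc_self hx)))
    · filter_upwards [Measure.ae_ne volume t] with x hxt hx
      rw [uIoc_of_le ht.le] at hx
      have hx' : t - x ≠ 0 := sub_ne_zero.2 (Ne.symm (lt_of_le_of_ne hx.2 hxt).ne)
      have hcont : ContinuousAt (fun ε : ℝ => (t - x + ε) ^ (-α)) 0 :=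
        (continuousAt_const.add continuousAt_id).rpow_const (Or.inl (by simpa using hx'))
      simpa using (hcont.tendsto.mono_left nhdsWithin_le_nhds).const_mul (w' x)
  exact le_of_tendsto hlim <| eventually_nhdsWithin_of_forall fun ε hε =>
    integral_derivWithin_mul_add_rpow_neg_nonpos hα0 ht hw hmin hε

lemma caputo_nonpos_of_isMinOn (hα0 : 0 ≤ α) (hα1 : α < 1) (ht : 0 < t)
    (hw : ContDiffOn ℝ 1 w (Icc 0 t)) (hmin : IsMinOn w (Icc 0 t) t) : caputo α w t ≤ 0 := by
  have hΓ : 0 < Real.Gamma (1 - α) := Real.Gamma_pos_of_pos (by linarith)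
  rw [caputo_eq_integral_derivWithin ht]
  exact mul_nonpos_of_nonneg_of_nonpos (by positivity)
    (integral_derivWithin_mul_sub_rpow_neg_nonpos hα0 hα1 ht hw hmin)

end Caputo

lemma ConvexOn.add_deriv_mul_sub_le {s : Set ℝ} {g : ℝ → ℝ} {x y : ℝ} (hg : ConvexOn ℝ s g)
    (hx : x ∈ s) (hy : y ∈ s) (hd : DifferentiableAt ℝ g x) :
    g x + deriv g x * (y - x) ≤ g y := by
  rcases lt_trichotomy x y with hxy | rfl | hyx
  · have := hg.deriv_le_slope hx hy hxy hd
    rw [slope_def_field, le_div_iff₀ (sub_pos.2 hxy)] at this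
    linarith
  · simp
  · have := hg.slope_le_deriv hy hx hyx hd
    rw [slope_def_field, div_le_iff₀ (sub_pos.2 hyx)] at this
    linarith

lemma ConvexOn.caputo_comp_le {α t : ℝ} {s : Set ℝ} {g p : ℝ → ℝ} (hgc : ConvexOn ℝ s g)
    (hs : IsOpen s) (hg : ContDiffOn ℝ 1 g s) (hα0 : 0 ≤ α) (hα1 : α < 1) (ht : 0 < t)
    (hp : ContDiffOn ℝ 1 p (Icc 0 t)) (hps : MapsTo p (Icc 0 t) s) :
    caputo α (fun τ => g (p τ)) t ≤ deriv g (p t) * caputo α p t := by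
  have hpt : p t ∈ s := hps (right_mem_Icc.2 ht.le)
  have hgp : ContDiffOn ℝ 1 (fun τ => g (p τ)) (Icc 0 t) := hg.comp hp hps
  have hlin : ContDiffOn ℝ 1 (fun τ => deriv g (p t) * p τ) (Icc 0 t) := contDiffOn_const.mul hp
  have hmin : IsMinOn (fun τ => g (p τ) - deriv g (p t) * p τ) (Icc 0 t) t :=
    isMinOn_iff.2 fun x hx => by
      have := hgc.add_deriv_mul_sub_le hpt (hps hx)
        ((hg.differentiableOn one_ne_zero).differentiableAt (hs.mem_nhds hpt))
      linarith
  have := caputo_nonpos_of_isMinOn hα0 hα1 ht (hgp.sub hlin) hmin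
  rw [caputo_sub hα1 ht hgp hlin, caputo_const_mul] at this
  linarith

section VolterraFunction

variable {s : Set ℝ} {k : ℝ → ℝ} {a : ℝ}

lemma hasDerivAt_sub_integral (hs : IsOpen s) (hsc : Convex ℝ s) (hk : ContinuousOn k s)
    (ha : a ∈ s) {X : ℝ} (hX : X ∈ s) :
    HasDerivAt (fun X => X - a - ∫ Y in a..X, k Y) (1 - k X) X := by
  have hint : IntervalIntegrable k volume a X :=
    (hk.mono (hsc.ordConnected.uIcc_subset ha hX)).intervalIntegrable
  exact ((hasDerivAt_id X).sub_const a).sub <| intervalIntegral.integral_hasDerivAt_right hint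
    (hk.stronglyMeasurableAtFilter hs X hX) (hk.continuousAt (hs.mem_nhds hX))

lemma contDiffOn_sub_integral (hs : IsOpen s) (hsc : Convex ℝ s) (hk : ContinuousOn k s)
    (ha : a ∈ s) : ContDiffOn ℝ 1 (fun X => X - a - ∫ Y in a..X, k Y) s := by
  have hderiv := fun X (hX : X ∈ s) => hasDerivAt_sub_integral hs hsc hk ha hX
  have hk' : ContinuousOn (fun X => 1 - k X) s := continuousOn_const.sub hk
  rw [contDiffOn_one_iff_derivWithin hs.uniqueDiffOn]
  refine ⟨fun X hX => (hderiv X hX).differentiableAt.differentiableWithinAt,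
    hk'.congr fun X hX => ?_⟩
  rw [derivWithin_of_isOpen hs hX, (hderiv X hX).deriv]

lemma convexOn_sub_integral (hs : IsOpen s) (hsc : Convex ℝ s) (hk : ContinuousOn k s)
    (hk_anti : AntitoneOn k s) (ha : a ∈ s) :
    ConvexOn ℝ s (fun X => X - a - ∫ Y in a..X, k Y) := by
  have hderiv := fun X (hX : X ∈ s) => hasDerivAt_sub_integral hs hsc hk ha hX
  refine MonotoneOn.convexOn_of_deriv hsc (contDiffOn_sub_integral hs hsc hk ha).continuousOn
    ?_ ?_ <;> rw [hs.interior_eq]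
  · exact fun X hX => (hderiv X hX).differentiableAt.differentiableWithinAt
  · intro X hX Y hY hXY
    rw [(hderiv X hX).deriv, (hderiv Y hY).deriv]
    linarith [hk_anti hX hY hXY]

lemma caputo_sub_integral_le {α t : ℝ} {p : ℝ → ℝ} (hs : IsOpen s) (hsc : Convex ℝ s)
    (hk : ContinuousOn k s) (hk_anti : AntitoneOn k s) (ha : a ∈ s) (hα0 : 0 ≤ α) (hα1 : α < 1)
    (ht : 0 < t) (hp : ContDiffOn ℝ 1 p (Icc 0 t)) (hps : MapsTo p (Icc 0 t) s) :
    caputo α (fun τ => p τ - a - ∫ Y in a..p τ, k Y) t ≤ (1 - k (p t)) * caputo α p t := by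
  have := (convexOn_sub_integral hs hsc hk hk_anti ha).caputo_comp_le hs
    (contDiffOn_sub_integral hs hsc hk ha) hα0 hα1 ht hp hps
  rwa [(hasDerivAt_sub_integral hs hsc hk ha (hps (right_mem_Icc.2 ht.le))).deriv] at this

end VolterraFunction

section Incidence

variable {f : ℝ → ℝ → ℝ}

lemma strictMonoOn_left_of_deriv_pos
    (hf : ContinuousOn (fun p : ℝ × ℝ => f p.1 p.2) (Ici 0 ×ˢ Ici 0)) {I : ℝ} (hI : 0 ≤ I)
    (hpos : ∀ S ∈ Ioi (0 : ℝ), 0 < deriv (fun s => f s I) S) :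
    StrictMonoOn (fun s => f s I) (Ici 0) :=
  strictMonoOn_of_deriv_pos (convex_Ici 0)
    (hf.comp (continuous_id.prodMk continuous_const).continuousOn fun _ hs => ⟨hs, hI⟩)
    (by rwa [interior_Ici])

lemma antitoneOn_right_of_deriv_nonpos
    (hf : ContinuousOn (fun p : ℝ × ℝ => f p.1 p.2) (Ici 0 ×ˢ Ici 0))
    (hfd : DifferentiableOn ℝ (fun p : ℝ × ℝ => f p.1 p.2) (Ioi 0 ×ˢ Ioi 0)) {S : ℝ} (hS : 0 < S)
    (hneg : ∀ I ∈ Ioi (0 : ℝ), deriv (fun i => f S i) I ≤ 0) :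
    AntitoneOn (fun i => f S i) (Ici 0) := by
  refine antitoneOn_of_deriv_nonpos (convex_Ici 0)
    (hf.comp (continuous_const.prodMk continuous_id).continuousOn fun _ hi => ⟨hS.le, hi⟩) ?_
    (by rwa [interior_Ici])
  rw [interior_Ici]
  exact hfd.comp (differentiableOn_const S |>.prodMk differentiableOn_id) fun _ hi => ⟨hS, hi⟩

end Incidence

section MonotoneOn

variable {h : ℝ → ℝ} {s : Set ℝ}

lemma MonotoneOn.antitoneOn_const_div {c : ℝ} (hh : MonotoneOn h s) (hc : 0 ≤ c)
    (hpos : ∀ x ∈ s, 0 < h x) : AntitoneOn (fun x => c / h x) s := fun x hx _ hy hxy =>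
  div_le_div_of_nonneg_left hc (hpos x hx) (hh hx hy hxy)

lemma MonotoneOn.sub_mul_sub_nonneg (hh : MonotoneOn h s) {a b : ℝ} (ha : a ∈ s) (hb : b ∈ s) :
    0 ≤ (h b - h a) * (b - a) := by
  rcases le_total a b with hab | hba
  · exact mul_nonneg (sub_nonneg.2 (hh ha hb hab)) (sub_nonneg.2 hab)
  · exact mul_nonneg_of_nonpos_of_nonpos (sub_nonpos.2 (hh hb ha hba)) (sub_nonpos.2 hba)

end MonotoneOn

/-- `R₀ ≤ 1` rewritten through `𝒟 = ξ₁ ξ₂ ξ₃ - ω φ ξ₃ - σ ρ ξ₂`. -/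
lemma sica_threshold {μ ρ φ σ ω d ξ₁ ξ₂ ξ₃ D F₀ : ℝ} (hμ : 0 < μ) (hρ : 0 < ρ) (hφ : 0 < φ)
    (hσ : 0 < σ) (hω : 0 < ω) (hd : 0 < d) (hξ₁ : ξ₁ = ρ + φ + μ) (hξ₂ : ξ₂ = ω + μ)
    (hξ₃ : ξ₃ = σ + μ + d) (hD : D = μ * (ξ₂ * (ξ₃ + ρ) + φ * ξ₃ + ρ * d) + ρ * ω * d)
    (hR₀ : F₀ * ξ₂ * ξ₃ / D ≤ 1) :
    F₀ * ξ₂ * ξ₃ ≤ ξ₁ * ξ₂ * ξ₃ - ω * φ * ξ₃ - σ * ρ * ξ₂ := by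
  have hDpos : 0 < D := by subst hD hξ₂ hξ₃; positivity
  rw [div_le_one hDpos] at hR₀
  linarith [show D = ξ₁ * ξ₂ * ξ₃ - ω * φ * ξ₃ - σ * ρ * ξ₂ by subst hD hξ₁ hξ₂ hξ₃; ring]

/-- `F₀`, `Fₛ`, `Fₛᵢ` stand for `f(S₀, 0)`, `f(s, 0)`, `f(s, i)`: the left-hand side is
`g'(s) ᶜD^α S + ᶜD^α I + (ω/ξ₂) ᶜD^α C + (σ/ξ₃) ᶜD^α A` with the system substituted. -/
lemma sica_lyapunov_combination_nonpos {Λ μ ρ φ σ ω ξ₁ ξ₂ ξ₃ S0 s i c a F₀ Fₛ Fₛᵢ : ℝ}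
    (hμ : 0 < μ) (hξ₂ : 0 < ξ₂) (hξ₃ : 0 < ξ₃) (hΛ : Λ = μ * S0) (hi : 0 ≤ i) (hF₀ : 0 ≤ F₀)
    (hFₛ : 0 < Fₛ) (hmono : 0 ≤ (Fₛ - F₀) * (s - S0)) (hFₛᵢ : Fₛᵢ ≤ Fₛ)
    (hthreshold : F₀ * ξ₂ * ξ₃ ≤ ξ₁ * ξ₂ * ξ₃ - ω * φ * ξ₃ - σ * ρ * ξ₂) :
    (1 - F₀ / Fₛ) * (Λ - μ * s - Fₛᵢ * i) + (Fₛᵢ * i - ξ₁ * i + σ * a + ω * c)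
      + ω / ξ₂ * (φ * i - ξ₂ * c) + σ / ξ₃ * (ρ * i - ξ₃ * a) ≤ 0 := by
  have hS : (1 - F₀ / Fₛ) * (μ * S0 - μ * s) ≤ 0 := by
    have : (1 - F₀ / Fₛ) * (μ * S0 - μ * s) = -(μ * ((Fₛ - F₀) * (s - S0)) / Fₛ) := by
      field_simp; ring
    rw [this, neg_nonpos]; positivity
  have hinc : F₀ / Fₛ * Fₛᵢ * i ≤ F₀ * i := by
    have : F₀ / Fₛ * Fₛᵢ ≤ F₀ := by
      rw [div_mul_eq_mul_div, div_le_iff₀ hFₛ]; exact mul_le_mul_of_nonneg_left hFₛᵢ hF₀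
    exact mul_le_mul_of_nonneg_right this hi
  have hcoef : (F₀ - ξ₁ + ω / ξ₂ * φ + σ / ξ₃ * ρ) * i ≤ 0 := by
    refine mul_nonpos_of_nonpos_of_nonneg ?_ hi
    have : F₀ - ξ₁ + ω / ξ₂ * φ + σ / ξ₃ * ρ
        = (F₀ * ξ₂ * ξ₃ - (ξ₁ * ξ₂ * ξ₃ - ω * φ * ξ₃ - σ * ρ * ξ₂)) / (ξ₂ * ξ₃) := by
      field_simp; ring
    rw [this]
    exact div_nonpos_of_nonpos_of_nonneg (by linarith) (by positivity)
  have : (1 - F₀ / Fₛ) * (Λ - μ * s - Fₛᵢ * i) + (Fₛᵢ * i - ξ₁ * i + σ * a + ω * c)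
      + ω / ξ₂ * (φ * i - ξ₂ * c) + σ / ξ₃ * (ρ * i - ξ₃ * a)
      = (1 - F₀ / Fₛ) * (μ * S0 - μ * s) + F₀ / Fₛ * Fₛᵢ * i - F₀ * i
        + (F₀ - ξ₁ + ω / ξ₂ * φ + σ / ξ₃ * ρ) * i := by
    rw [hΛ]; field_simp; ring
  linarith

theorem stmt_7_general (α T : ℝ) (hα0 : 0 < α) (hα1 : α < 1)
    (Λ μ ρ φ σ ω d ξ₁ ξ₂ ξ₃ D S0 R₀ : ℝ)
    (hΛ : 0 < Λ) (hμ : 0 < μ) (hρ : 0 < ρ) (hφ : 0 < φ) (hσ : 0 < σ)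
    (hω : 0 < ω) (hd : 0 < d)
    (hξ₁ : ξ₁ = ρ + φ + μ) (hξ₂ : ξ₂ = ω + μ) (hξ₃ : ξ₃ = σ + μ + d)
    (hD : D = μ * (ξ₂ * (ξ₃ + ρ) + φ * ξ₃ + ρ * d) + ρ * ω * d)
    (hS0 : S0 = Λ / μ)
    (f : ℝ → ℝ → ℝ)
    (hR₀def : R₀ = f S0 0 * ξ₂ * ξ₃ / D)
    (hR₀ : R₀ ≤ 1)
    (hf_cont : ContinuousOn (fun p : ℝ × ℝ => f p.1 p.2) (Set.Ici 0 ×ˢ Set.Ici 0))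
    (hf_cd : ContDiffOn ℝ 1 (fun p : ℝ × ℝ => f p.1 p.2) (Set.Ioi 0 ×ˢ Set.Ioi 0))
    (hH1 : ∀ I : ℝ, 0 ≤ I → f 0 I = 0)
    (hH2 : ∀ S I : ℝ, 0 < S → 0 ≤ I → 0 < deriv (fun s => f s I) S)
    (hH3 : ∀ S I : ℝ, 0 ≤ S → 0 ≤ I → deriv (fun i => f S i) I ≤ 0)
    (S I C A : ℝ → ℝ)
    (hS : ContDiffOn ℝ 1 S (Set.Icc 0 T)) (hI : ContDiffOn ℝ 1 I (Set.Icc 0 T))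
    (hC : ContDiffOn ℝ 1 C (Set.Icc 0 T)) (hA : ContDiffOn ℝ 1 A (Set.Icc 0 T))
    (hSpos : ∀ t ∈ Set.Icc (0:ℝ) T, 0 < S t)
    (hIpos : ∀ t ∈ Set.Icc (0:ℝ) T, 0 < I t)
    (hsys1 : ∀ t ∈ Set.Ioc (0:ℝ) T,
      caputo α S t = Λ - μ * S t - f (S t) (I t) * I t)
    (hsys2 : ∀ t ∈ Set.Ioc (0:ℝ) T,
      caputo α I t = f (S t) (I t) * I t - ξ₁ * I t + σ * A t + ω * C t)
    (hsys3 : ∀ t ∈ Set.Ioc (0:ℝ) T,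
      caputo α C t = φ * I t - ξ₂ * C t)
    (hsys4 : ∀ t ∈ Set.Ioc (0:ℝ) T,
      caputo α A t = ρ * I t - ξ₃ * A t) :
    ∀ t ∈ Set.Ioc (0:ℝ) T,
      caputo α
        (fun τ => S τ - S0 - (∫ X in S0..S τ, f S0 0 / f X 0)
          + I τ + (ω / ξ₂) * C τ + (σ / ξ₃) * A τ) t ≤ 0 := by
  intro t ht
  have hsub : Icc 0 t ⊆ Icc 0 T := Icc_subset_Icc_right ht.2
  have hS0pos : 0 < S0 := hS0 ▸ div_pos hΛ hμ
  have hΛS0 : Λ = μ * S0 := by rw [hS0]; field_simp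
  have hSt : 0 < S t := hSpos t (Ioc_subset_Icc_self ht)
  have hIt : 0 ≤ I t := (hIpos t (Ioc_subset_Icc_self ht)).le
  have hSmaps : MapsTo S (Icc 0 t) (Ioi 0) := fun x hx => hSpos x (hsub hx)
  have hmono := strictMonoOn_left_of_deriv_pos hf_cont le_rfl fun S hS => hH2 S 0 hS le_rfl
  have hfpos : ∀ X ∈ Ioi (0 : ℝ), 0 < f X 0 := fun X hX =>
    (hH1 0 le_rfl).symm.trans_lt (hmono self_mem_Ici (mem_Ici.2 (le_of_lt hX)) hX)
  have hk : ContinuousOn (fun X => f S0 0 / f X 0) (Ioi 0) :=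
    continuousOn_const.div (hf_cont.comp (continuous_id.prodMk continuous_const).continuousOn
      fun X hX => ⟨mem_Ici.2 (le_of_lt hX), self_mem_Ici⟩) fun X hX => (hfpos X hX).ne'
  have hk_anti : AntitoneOn (fun X => f S0 0 / f X 0) (Ioi 0) :=
    (hmono.monotoneOn.mono Ioi_subset_Ici_self).antitoneOn_const_div (hfpos S0 hS0pos).le hfpos
  have hL := caputo_sub_integral_le isOpen_Ioi (convex_Ioi 0) hk hk_anti hS0pos hα0.le hα1 ht.1
    (hS.mono hsub) hSmaps
  have hL' : ContDiffOn ℝ 1 (fun τ => S τ - S0 - ∫ X in S0..S τ, f S0 0 / f X 0) (Icc 0 t) :=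
    (contDiffOn_sub_integral isOpen_Ioi (convex_Ioi 0) hk hS0pos).comp (hS.mono hsub) hSmaps
  have hC' : ContDiffOn ℝ 1 (fun τ => ω / ξ₂ * C τ) (Icc 0 t) :=
    contDiffOn_const.mul (hC.mono hsub)
  have hA' : ContDiffOn ℝ 1 (fun τ => σ / ξ₃ * A τ) (Icc 0 t) :=
    contDiffOn_const.mul (hA.mono hsub)
  rw [caputo_add hα1 ht.1 ((hL'.add (hI.mono hsub)).add hC') hA',
    caputo_add hα1 ht.1 (hL'.add (hI.mono hsub)) hC', caputo_add hα1 ht.1 hL' (hI.mono hsub),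
    caputo_const_mul, caputo_const_mul, hsys2 t ht, hsys3 t ht, hsys4 t ht]
  rw [hsys1 t ht] at hL
  have hf_anti : f (S t) (I t) ≤ f (S t) 0 :=
    antitoneOn_right_of_deriv_nonpos hf_cont (hf_cd.differentiableOn one_ne_zero) hSt
      (fun i hi => hH3 _ i hSt.le (le_of_lt hi)) self_mem_Ici hIt hIt
  linarith [sica_lyapunov_combination_nonpos (c := C t) (a := A t) hμ
    (show 0 < ξ₂ by linarith) (show 0 < ξ₃ by linarith) hΛS0 hIt
    (hfpos S0 hS0pos).le (hfpos (S t) hSt)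
    (hmono.monotoneOn.sub_mul_sub_nonneg (mem_Ici.2 hS0pos.le) (mem_Ici.2 hSt.le)) hf_anti
    (sica_threshold hμ hρ hφ hσ hω hd hξ₁ hξ₂ hξ₃ hD (hR₀def ▸ hR₀))]

theorem stmt_7 (α T : ℝ) (hα0 : 0 < α) (hα1 : α < 1) (hT : 0 < T)
    (Λ μ ρ φ σ ω d ξ₁ ξ₂ ξ₃ D S0 R₀ : ℝ)
    (hΛ : 0 < Λ) (hμ : 0 < μ) (hρ : 0 < ρ) (hφ : 0 < φ) (hσ : 0 < σ)
    (hω : 0 < ω) (hd : 0 < d)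
    (hξ₁ : ξ₁ = ρ + φ + μ) (hξ₂ : ξ₂ = ω + μ) (hξ₃ : ξ₃ = σ + μ + d)
    (hD : D = μ * (ξ₂ * (ξ₃ + ρ) + φ * ξ₃ + ρ * d) + ρ * ω * d)
    (hS0 : S0 = Λ / μ)
    (f : ℝ → ℝ → ℝ)
    (hR₀def : R₀ = f S0 0 * ξ₂ * ξ₃ / D)
    (hR₀ : R₀ ≤ 1)
    (hf_nonneg : ∀ S I : ℝ, 0 ≤ S → 0 ≤ I → 0 ≤ f S I)
    (hf_cont : ContinuousOn (fun p : ℝ × ℝ => f p.1 p.2) (Set.Ici 0 ×ˢ Set.Ici 0))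
    (hf_cd : ContDiffOn ℝ 1 (fun p : ℝ × ℝ => f p.1 p.2) (Set.Ioi 0 ×ˢ Set.Ioi 0))
    (hH1 : ∀ I : ℝ, 0 ≤ I → f 0 I = 0)
    (hH2 : ∀ S I : ℝ, 0 < S → 0 ≤ I → 0 < deriv (fun s => f s I) S)
    (hH3 : ∀ S I : ℝ, 0 ≤ S → 0 ≤ I → deriv (fun i => f S i) I ≤ 0)
    (S I C A : ℝ → ℝ)
    (hS : ContDiffOn ℝ 1 S (Set.Icc 0 T)) (hI : ContDiffOn ℝ 1 I (Set.Icc 0 T))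
    (hC : ContDiffOn ℝ 1 C (Set.Icc 0 T)) (hA : ContDiffOn ℝ 1 A (Set.Icc 0 T))
    (hSpos : ∀ t ∈ Set.Icc (0:ℝ) T, 0 < S t)
    (hIpos : ∀ t ∈ Set.Icc (0:ℝ) T, 0 < I t)
    (hCpos : ∀ t ∈ Set.Icc (0:ℝ) T, 0 < C t)
    (hApos : ∀ t ∈ Set.Icc (0:ℝ) T, 0 < A t)
    (hsys1 : ∀ t ∈ Set.Ioc (0:ℝ) T,
      caputo α S t = Λ - μ * S t - f (S t) (I t) * I t)
    (hsys2 : ∀ t ∈ Set.Ioc (0:ℝ) T,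
      caputo α I t = f (S t) (I t) * I t - ξ₁ * I t + σ * A t + ω * C t)
    (hsys3 : ∀ t ∈ Set.Ioc (0:ℝ) T,
      caputo α C t = φ * I t - ξ₂ * C t)
    (hsys4 : ∀ t ∈ Set.Ioc (0:ℝ) T,
      caputo α A t = ρ * I t - ξ₃ * A t) :
    ∀ t ∈ Set.Ioc (0:ℝ) T,
      caputo α
        (fun τ => S τ - S0 - (∫ X in S0..S τ, f S0 0 / f X 0)
          + I τ + (ω / ξ₂) * C τ + (σ / ξ₃) * A τ) t ≤ 0 :=
  stmt_7_general α T hα0 hα1 Λ μ ρ φ σ ω d ξ₁ ξ₂ ξ₃ D S0 R₀ hΛ hμ hρ hφ hσ hω hd hξ₁ hξ₂ hξ₃ hD hS0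
    f hR₀def hR₀ hf_cont hf_cd hH1 hH2 hH3 S I C A hS hI hC hA hSpos hIpos hsys1 hsys2 hsys3 hsys4
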